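/- arXiv:2502.12609 — 2 statements merged into one kernel-verified Lean document; each statement's English description precedes it below -/
import Mathlib

section
/- Failure of the odd-type moment degrees of freedom for p = 2: let A₁, A₂, A₃ be affinely independent points of ℝ² with barycentric coordinates λ₁, λ₂, λ₃, and define the quadratic polynomial q := 2 − 3(λ₁² + λ₂² + λ₃²). Then for every i ≠ j and every affine function ℓ : ℝ → ℝ one has ∫₀¹ q(γ_{ij}(t)) ℓ(t) dt = 0, yet q evaluated at the barycenter (A₁+A₂+A₃)/3 equals 1; in particular q is a nonzero polynomial of degree at most 2 all of whose degrees of freedom (1.13) for p = 2 vanish. -/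
/-!
On the edge from `A i` to `A j` the barycentric coordinates are `1 - t`, `t` and `0`, so `q`
restricts to `2 - 3((1 - t)² + t²) = -(1 - 6t + 6t²)`, minus the shifted Legendre polynomial of
degree two, which is orthogonal to affine functions on `[0, 1]`. At the barycenter every
barycentric coordinate equals `1/3`, so `q = 2 - 3 · 3 · (1/3)² = 1`.
-/

open MeasureTheory Polynomial

/-- The edge parametrization `γ_{ij}(t) = A i + t • (A j - A i)`. -/
noncomputable def edgeParam (A : Fin 3 → (Fin 2 → ℝ)) (i j : Fin 3) (t : ℝ) :
    Fin 2 → ℝ :=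
  A i + t • (A j - A i)

section Barycentric

variable {ι V P : Type*} [Fintype ι] [DecidableEq ι] [AddCommGroup V] [AddTorsor V P]

theorem sum_sq_barycentric_lineMap {k : Type*} [CommRing k] [Module k V] {A : ι → P}
    {lam : ι → P →ᵃ[k] k} (hlam : ∀ i j, lam i (A j) = if i = j then 1 else 0)
    {i j : ι} (hij : i ≠ j) (t : k) :
    ∑ l, lam l (AffineMap.lineMap (A i) (A j) t) ^ 2 = (1 - t) ^ 2 + t ^ 2 := by
  simp_rw [AffineMap.apply_lineMap, hlam, AffineMap.lineMap_apply_ring]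
  rw [Fintype.sum_eq_add i j hij]
  · simp [hij, hij.symm]
  · rintro l ⟨hli, hlj⟩
    simp [hli, hlj]

theorem barycentric_apply_centroid {k : Type*} [Field k] [CharZero k] [Module k V] {A : ι → P}
    {lam : ι → P →ᵃ[k] k} (hlam : ∀ i j, lam i (A j) = if i = j then 1 else 0) (i : ι) :
    lam i (Finset.univ.centroid k A) = (Fintype.card ι : k)⁻¹ := by
  have hw := Finset.sum_centroidWeights_eq_one_of_card_ne_zero k Finset.univ
    (Finset.card_pos.mpr ⟨i, Finset.mem_univ i⟩).ne'
  rw [Finset.centroid_def, Finset.map_affineCombination _ _ _ hw,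
    Finset.affineCombination_eq_linear_combination _ _ _ hw]
  simp [hlam]

end Barycentric

theorem centroid_fin_three {k V : Type*} [Field k] [CharZero k] [AddCommGroup V] [Module k V]
    (A : Fin 3 → V) : Finset.univ.centroid k A = (1 / 3 : k) • (A 0 + A 1 + A 2) := by
  rw [Finset.centroid_def, Finset.affineCombination_eq_linear_combination _ _ _
    (Finset.sum_centroidWeights_eq_one_of_card_ne_zero k _ (by simp))]
  simp [Fin.sum_univ_three, smul_add]

theorem integral_shiftedLegendre_two_mul_affine (a b : ℝ) :
    ∫ t in (0 : ℝ)..1, (1 - 6 * t + 6 * t ^ 2) * (a * t + b) = 0 := by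
  -- One integration by parts: `t - 3t² + 2t³` and `(t (1 - t))² / 2` are primitives of
  -- `1 - 6t + 6t²` and of `t - 3t² + 2t³`, and both vanish at `0` and `1`.
  have hF : ∀ t : ℝ, HasDerivAt
      (fun t => (t - 3 * t ^ 2 + 2 * t ^ 3) * (a * t + b) - a * (t * (1 - t)) ^ 2 / 2)
      ((1 - 6 * t + 6 * t ^ 2) * (a * t + b)) t := by
    intro t
    have hu : HasDerivAt (fun t : ℝ => t - 3 * t ^ 2 + 2 * t ^ 3) (1 - 6 * t + 6 * t ^ 2) t :=
      ((hasDerivAt_id' t).fun_sub ((hasDerivAt_pow 2 t).const_mul 3)).fun_add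
        ((hasDerivAt_pow 3 t).const_mul 2) |>.congr_deriv (by ring)
    have hv : HasDerivAt (fun t : ℝ => (t * (1 - t)) ^ 2) (2 * (t * (1 - t)) * (1 - 2 * t)) t :=
      ((hasDerivAt_id' t).fun_mul ((hasDerivAt_id' t).const_sub 1)).fun_pow 2
        |>.congr_deriv (by ring)
    exact (hu.fun_mul (((hasDerivAt_id' t).const_mul a).add_const b)).fun_sub
      ((hv.const_mul a).div_const 2) |>.congr_deriv (by ring)
  rw [intervalIntegral.integral_eq_sub_of_hasDerivAt (fun t _ => hF t)
    (Continuous.intervalIntegrable (by fun_prop) _ _)]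
  norm_num

theorem integral_shiftedLegendre_two_mul_affineMap (ℓ : ℝ →ᵃ[ℝ] ℝ) :
    ∫ t in (0 : ℝ)..1, (1 - 6 * t + 6 * t ^ 2) * ℓ t = 0 := by
  have hℓ : ∀ t, ℓ t = (ℓ 1 - ℓ 0) * t + ℓ 0 := fun t => by
    simpa [AffineMap.lineMap_apply_ring', mul_comm] using ℓ.apply_lineMap 0 1 t
  simpa only [← hℓ] using integral_shiftedLegendre_two_mul_affine (ℓ 1 - ℓ 0) (ℓ 0)

theorem edgeParam_eq_lineMap (A : Fin 3 → (Fin 2 → ℝ)) (i j : Fin 3) (t : ℝ) :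
    edgeParam A i j t = AffineMap.lineMap (A i) (A j) t := by
  rw [edgeParam, AffineMap.lineMap_apply_module', add_comm]

theorem odd_dofs_fail_for_p_two_general
    (A : Fin 3 → (Fin 2 → ℝ))
    (lam : Fin 3 → ((Fin 2 → ℝ) →ᵃ[ℝ] ℝ))
    (hlam : ∀ i j : Fin 3, lam i (A j) = if i = j then 1 else 0)
    (q : (Fin 2 → ℝ) → ℝ)
    (hq : ∀ x : Fin 2 → ℝ, q x = 2 - 3 * ((lam 0 x) ^ 2 + (lam 1 x) ^ 2 + (lam 2 x) ^ 2)) :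
    (∀ i j : Fin 3, i ≠ j → ∀ ℓ : ℝ →ᵃ[ℝ] ℝ,
      ∫ t in (0:ℝ)..1, q (edgeParam A i j t) * ℓ t = 0) ∧
    q ((1 / 3 : ℝ) • (A 0 + A 1 + A 2)) = 1 := by
  constructor
  · intro i j hij ℓ
    have hq_edge : ∀ t, q (edgeParam A i j t) = -(1 - 6 * t + 6 * t ^ 2) := by
      intro t
      have hsum := sum_sq_barycentric_lineMap hlam hij t
      rw [Fin.sum_univ_three] at hsum
      rw [hq, edgeParam_eq_lineMap, hsum]
      ring
    simp_rw [hq_edge, neg_mul, intervalIntegral.integral_neg,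
      integral_shiftedLegendre_two_mul_affineMap, neg_zero]
  · rw [hq, ← centroid_fin_three, barycentric_apply_centroid hlam,
      barycentric_apply_centroid hlam, barycentric_apply_centroid hlam]
    norm_num

/-- Failure of the odd-type moment degrees of freedom for `p = 2`: the quadratic
`q = 2 − 3(λ₁² + λ₂² + λ₃²)` has vanishing edge moments against all affine functions,
yet equals `1` at the barycenter. -/
theorem odd_dofs_fail_for_p_two
    (A : Fin 3 → (Fin 2 → ℝ)) (hA : AffineIndependent ℝ A)
    (lam : Fin 3 → ((Fin 2 → ℝ) →ᵃ[ℝ] ℝ))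
    (hlam : ∀ i j : Fin 3, lam i (A j) = if i = j then 1 else 0)
    (q : (Fin 2 → ℝ) → ℝ)
    (hq : ∀ x : Fin 2 → ℝ, q x = 2 - 3 * ((lam 0 x) ^ 2 + (lam 1 x) ^ 2 + (lam 2 x) ^ 2)) :
    (∀ i j : Fin 3, i ≠ j → ∀ ℓ : ℝ →ᵃ[ℝ] ℝ,
      ∫ t in (0:ℝ)..1, q (edgeParam A i j t) * ℓ t = 0) ∧
    q ((1 / 3 : ℝ) • (A 0 + A 1 + A 2)) = 1 :=
  odd_dofs_fail_for_p_two_general A lam hlam q hq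
end

section
/- Jump properties of the edge nonconforming bubble (first step of the proof of Lemma 1.2): let p be a positive integer, let A, B, C be affinely independent points of ℝ², and let λ_A : ℝ² → ℝ be the barycentric coordinate of the triangle conv{A,B,C} with λ_A(A) = 1 and λ_A(B) = λ_A(C) = 0. Define b(x) := L_p(1 − 2λ_A(x)). Then: (a) b(B + t(C−B)) = 1 for all t ∈ [0,1], i.e., b is identically 1 on the edge from B to C; (b) for X ∈ {B, C}, b(A + t(X−A)) = L_p(2t−1) for all t ∈ [0,1]; consequently (c) for X ∈ {B, C} and every univariate polynomial q of degree at most p−1, ∫₀¹ b(A + t(X−A)) q(t) dt = 0. -/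
open MeasureTheory Polynomial

/-- The Legendre polynomial of degree `k`, via Rodrigues' formula
`L_k(x) = (1/(2^k k!)) (d/dx)^k [(x² − 1)^k]`. -/
noncomputable def legendre (k : ℕ) : Polynomial ℝ :=
  ((2 ^ k * k.factorial : ℝ)⁻¹) •
    ((fun q : Polynomial ℝ => Polynomial.derivative q)^[k] ((Polynomial.X ^ 2 - 1) ^ k))

/-! Along every segment from `A`, the function `b` is `L_p(2t − 1)`, since `λ_A` falls affinely
from `1` to `0`; on the opposite edge `λ_A = 0`, so `b = L_p(1) = 1`. The moments then vanish by
the orthogonality of `L_p` to polynomials of lower degree: after the substitution `x = 2t − 1`,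
integrating by parts `p` times against Rodrigues' formula moves all derivatives onto `q`, the
boundary terms vanishing because `(x² − 1)^p` has roots of order `p` at `±1`. -/

theorem AffineMap.apply_add_smul_sub {k V W : Type*} [Ring k] [AddCommGroup V] [Module k V]
    [AddCommGroup W] [Module k W] (f : V →ᵃ[k] W) (P Q : V) (t : k) :
    f (P + t • (Q - P)) = f P + t • (f Q - f P) := by
  have := f.apply_lineMap P Q t
  rwa [AffineMap.lineMap_apply_module', AffineMap.lineMap_apply_module', add_comm,
    add_comm _ (f P)] at this

namespace Polynomial

variable {R : Type*} [CommRing R]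

theorem eval_iterate_derivative_eq_zero_of_pow_dvd {g : R[X]} {t : R} {n j : ℕ}
    (hdvd : (X - C t) ^ n ∣ g) (hj : j < n) : (derivative^[j] g).eval t = 0 :=
  dvd_iff_isRoot.mp <| (dvd_pow_self _ (Nat.sub_ne_zero_of_lt hj)).trans
    (pow_sub_dvd_iterate_derivative_of_pow_dvd j hdvd)

theorem eval_iterate_derivative_X_sub_C_pow_mul (n : ℕ) (t : R) (f : R[X]) :
    (derivative^[n] ((X - C t) ^ n * f)).eval t = n.factorial * f.eval t := by
  rw [iterate_derivative_mul, eval_finsetSum,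
    Finset.sum_eq_single_of_mem 0 (Finset.mem_range.mpr n.succ_pos)]
  · simp [iterate_derivative_X_sub_pow_self]
  · intro k hk hk0
    rw [iterate_derivative_X_sub_pow, Nat.sub_sub_self (Finset.mem_range_succ_iff.mp hk)]
    simp [zero_pow hk0]

theorem X_sq_sub_one_pow_eq (n : ℕ) :
    ((X : R[X]) ^ 2 - 1) ^ n = (X - C 1) ^ n * (X - C (-1)) ^ n := by
  rw [← mul_pow]
  congr 1
  simp only [map_one, map_neg, sub_neg_eq_add]
  ring

end Polynomial

theorem integral_iterate_derivative_mul_eq_zero {a b : ℝ} (m : ℕ) {g : ℝ[X]}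
    (hg : ∀ j < m, (derivative^[j] g).eval a = 0 ∧ (derivative^[j] g).eval b = 0)
    {s : ℝ[X]} (hs : s.natDegree < m) :
    ∫ x in a..b, (derivative^[m] g).eval x * s.eval x = 0 := by
  induction m generalizing s with
  | zero => exact absurd hs (Nat.not_lt_zero _)
  | succ m ih =>
    have hparts := intervalIntegral.integral_deriv_mul_eq_sub
      (u := fun x => (derivative^[m] g).eval x) (v := fun x => s.eval x)
      (u' := fun x => (derivative^[m + 1] g).eval x) (v' := fun x => (derivative s).eval x)
      (a := a) (b := b)
      (fun x _ => by
        rw [Function.iterate_succ_apply']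
        exact (derivative^[m] g).hasDerivAt x)
      (fun x _ => s.hasDerivAt x)
      ((Polynomial.continuous _).intervalIntegrable _ _)
      ((Polynomial.continuous _).intervalIntegrable _ _)
    have hrest : ∫ x in a..b, (derivative^[m] g).eval x * (derivative s).eval x = 0 := by
      rcases Nat.eq_zero_or_pos s.natDegree with hs0 | hs0
      · simp [derivative_of_natDegree_zero hs0]
      · exact ih (fun j hj => hg j (hj.trans m.lt_succ_self))
          ((natDegree_derivative_lt hs0.ne').trans_le (by omega))
    rw [intervalIntegral.integral_add (μ := volume)
      (f := fun x => (derivative^[m + 1] g).eval x * s.eval x)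
      (g := fun x => (derivative^[m] g).eval x * (derivative s).eval x)
      (((Polynomial.continuous _).mul (Polynomial.continuous _)).intervalIntegrable _ _)
      (((Polynomial.continuous _).mul (Polynomial.continuous _)).intervalIntegrable _ _),
      hrest, add_zero, (hg m m.lt_succ_self).1, (hg m m.lt_succ_self).2] at hparts
    simpa using hparts

theorem legendre_eq_smul_iterate_derivative (k : ℕ) :
    legendre k = ((2 ^ k * k.factorial : ℝ)⁻¹) • derivative^[k] ((X ^ 2 - 1) ^ k) :=
  rfl

theorem legendre_eval_one (p : ℕ) : (legendre p).eval 1 = 1 := by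
  rw [legendre_eq_smul_iterate_derivative, eval_smul, X_sq_sub_one_pow_eq,
    eval_iterate_derivative_X_sub_C_pow_mul, smul_eq_mul]
  norm_num
  field_simp

theorem integral_legendre_mul_eq_zero {p : ℕ} {q : ℝ[X]} (hq : q.natDegree < p) :
    ∫ x in (-1 : ℝ)..1, (legendre p).eval x * q.eval x = 0 := by
  have hvanish : ∀ j < p, (derivative^[j] (((X : ℝ[X]) ^ 2 - 1) ^ p)).eval (-1) = 0 ∧
      (derivative^[j] (((X : ℝ[X]) ^ 2 - 1) ^ p)).eval 1 = 0 := by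
    intro j hj
    rw [X_sq_sub_one_pow_eq]
    exact ⟨eval_iterate_derivative_eq_zero_of_pow_dvd (dvd_mul_left _ _) hj,
      eval_iterate_derivative_eq_zero_of_pow_dvd (dvd_mul_right _ _) hj⟩
  simp_rw [legendre_eq_smul_iterate_derivative, eval_smul, smul_eq_mul, mul_assoc]
  rw [intervalIntegral.integral_const_mul, integral_iterate_derivative_mul_eq_zero p hvanish hq,
    mul_zero]

theorem integral_legendre_two_mul_sub_one_mul_eq_zero {p : ℕ} {q : ℝ[X]} (hq : q.natDegree < p) :
    ∫ t in (0 : ℝ)..1, (legendre p).eval (2 * t - 1) * q.eval t = 0 := by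
  set q' : ℝ[X] := q.comp (C 2⁻¹ * (X + 1))
  have hq' : q'.natDegree < p := by
    refine lt_of_le_of_lt ?_ hq
    calc q'.natDegree ≤ q.natDegree * (C 2⁻¹ * (X + 1) : ℝ[X]).natDegree := natDegree_comp_le
      _ ≤ q.natDegree * 1 := by gcongr; compute_degree
      _ = q.natDegree := mul_one _
  have hsubst : ∀ t : ℝ, q.eval t = q'.eval (2 * t - 1) := fun t => by
    simp only [q', eval_comp, eval_mul, eval_C, eval_add, eval_X, eval_one]
    congr 1
    ring
  simp_rw [hsubst]
  rw [intervalIntegral.integral_comp_mul_sub (fun x => (legendre p).eval x * q'.eval x)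
    two_ne_zero]
  norm_num [integral_legendre_mul_eq_zero hq']

theorem edge_bubble_properties_general (p : ℕ) (hp_pos : 0 < p)
    (A B C : Fin 2 → ℝ)
    (lamA : (Fin 2 → ℝ) →ᵃ[ℝ] ℝ)
    (hA : lamA A = 1) (hB : lamA B = 0) (hC : lamA C = 0)
    (b : (Fin 2 → ℝ) → ℝ)
    (hb : ∀ x : Fin 2 → ℝ, b x = (legendre p).eval (1 - 2 * lamA x)) :
    (∀ t ∈ Set.Icc (0:ℝ) 1, b (B + t • (C - B)) = 1) ∧
    (∀ X ∈ ({B, C} : Set (Fin 2 → ℝ)), ∀ t ∈ Set.Icc (0:ℝ) 1,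
      b (A + t • (X - A)) = (legendre p).eval (2 * t - 1)) ∧
    (∀ X ∈ ({B, C} : Set (Fin 2 → ℝ)), ∀ q : Polynomial ℝ, q.natDegree ≤ p - 1 →
      ∫ t in (0:ℝ)..1, b (A + t • (X - A)) * q.eval t = 0) := by
  have hBC : ∀ X ∈ ({B, C} : Set (Fin 2 → ℝ)), lamA X = 0 := by
    rintro X (rfl | rfl) <;> assumption
  have edge_from_A : ∀ X, lamA X = 0 → ∀ t : ℝ,
      b (A + t • (X - A)) = (legendre p).eval (2 * t - 1) := by
    intro X hX t
    rw [hb, lamA.apply_add_smul_sub, hA, hX, smul_eq_mul]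
    ring_nf
  refine ⟨fun t _ => ?_, fun X hX t _ => edge_from_A X (hBC X hX) t, fun X hX q hq => ?_⟩
  · rw [hb, lamA.apply_add_smul_sub, hB, hC]
    norm_num [legendre_eval_one]
  · simp_rw [edge_from_A X (hBC X hX)]
    exact integral_legendre_two_mul_sub_one_mul_eq_zero (by omega)

/-- Jump properties of the edge nonconforming bubble `b = L_p(1 − 2λ_A)`:
(a) `b ≡ 1` on the edge from `B` to `C`;
(b) on the edges emanating from `A`, `b` restricts to `L_p(2t−1)`;
(c) consequently the moments of `b` on those edges against polynomials of degree at most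
`p − 1` vanish. -/
theorem edge_bubble_properties (p : ℕ) (hp_pos : 0 < p)
    (A B C : Fin 2 → ℝ) (hABC : AffineIndependent ℝ ![A, B, C])
    (lamA : (Fin 2 → ℝ) →ᵃ[ℝ] ℝ)
    (hA : lamA A = 1) (hB : lamA B = 0) (hC : lamA C = 0)
    (b : (Fin 2 → ℝ) → ℝ)
    (hb : ∀ x : Fin 2 → ℝ, b x = (legendre p).eval (1 - 2 * lamA x)) :
    (∀ t ∈ Set.Icc (0:ℝ) 1, b (B + t • (C - B)) = 1) ∧
    (∀ X ∈ ({B, C} : Set (Fin 2 → ℝ)), ∀ t ∈ Set.Icc (0:ℝ) 1,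
      b (A + t • (X - A)) = (legendre p).eval (2 * t - 1)) ∧
    (∀ X ∈ ({B, C} : Set (Fin 2 → ℝ)), ∀ q : Polynomial ℝ, q.natDegree ≤ p - 1 →
      ∫ t in (0:ℝ)..1, b (A + t • (X - A)) * q.eval t = 0) :=
  edge_bubble_properties_general p hp_pos A B C lamA hA hB hC b hb
end
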